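/- Let W be a Coxeter group, x ∈ W, and v₁ an element of a standard parabolic subgroup. For each v' ≤ v₁ consider the element x v'^{-1}. Then there exists v₃ ≤ v₁ such that x v₃^{-1} is the unique element of minimal length in {x v'^{-1} : v' ≤ v₁}, and moreover l(x v₃^{-1}) = l(x) - l(v₃). -/

import Mathlib

/-- The Bruhat order on a Coxeter group: `u ≤ v` iff `u` is the product of a subword of
some reduced word for `v`. -/
def BruhatLE {B W : Type*} [Group W] {M : CoxeterMatrix B} (cs : CoxeterSystem M W)
    (u v : W) : Prop :=
  ∃ ω : List B, cs.IsReduced ω ∧ cs.wordProd ω = v ∧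
    ∃ ω' : List B, ω'.Sublist ω ∧ cs.wordProd ω' = u

/-!
Induct on `ℓ x + ℓ v₁`, peeling off a right descent `s` of `v₁`, along which the lower
interval splits as `[1, v₁] = [1, v₁ s] ∪ [1, v₁ s] s`. If `x s < x`, then `v' ↦ v' s`
permutes `[1, v₁]` and the problem for `x` becomes the one for `x s`. If `x s > x`, the
minimiser for `(x, v₁ s)` still wins: for `u ≤ v₁ s` with `u s > u` one has
`ℓ (x u⁻¹) < ℓ (x s u⁻¹)`. This length inequality, and the independence of the subword
description of the Bruhat order from the chosen reduced word, both rest on the strong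
exchange condition, which comes from the reflection cocycle `η(w, t) = ±1`, equal to `-1`
exactly when `ℓ (w t) < ℓ w`.
-/

namespace CoxeterSystem

open List

variable {B W : Type*} [Group W] {M : CoxeterMatrix B} (cs : CoxeterSystem M W)

local prefix:100 "s " => cs.simple
local prefix:100 "π " => cs.wordProd
local prefix:100 "ℓ " => cs.length
local prefix:100 "ris " => cs.rightInvSeq

section ReflectionCocycle

open scoped Classical

noncomputable def simpleSignPerm (i : B) : Equiv.Perm (W × ℤˣ) :=
  Function.Involutive.toPerm
    (fun p => (s i * p.1 * s i, p.2 * if p.1 = s i then -1 else 1)) <| by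
      rintro ⟨t, ε⟩
      have hfix : s i * t * s i = s i ↔ t = s i := by
        rw [mul_eq_right, mul_eq_one_iff_eq_inv', inv_simple, eq_comm]
      simp only [hfix, Prod.mk.injEq, ← mul_assoc, simple_mul_simple_self, one_mul]
      split_ifs <;> simp [mul_assoc]

lemma simpleSignPerm_apply (i : B) (t : W) (ε : ℤˣ) :
    cs.simpleSignPerm i (t, ε) = (s i * t * s i, ε * if t = s i then -1 else 1) :=
  rfl

lemma simpleSignPerm_mul_pow_apply (i j : B) (k : ℕ) (t : W) (ε : ℤˣ) :
    ((cs.simpleSignPerm i * cs.simpleSignPerm j) ^ k) (t, ε) =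
      (((s j * s i) ^ k)⁻¹ * t * (s j * s i) ^ k,
        ε * ∏ r ∈ Finset.range (2 * k), if t = (s j * s i) ^ r * s j then -1 else 1) := by
  set p := s j * s i with hp
  have hpinv : p⁻¹ = s i * s j := by simp [hp]
  have hconj : ∀ x : W, s i * (s j * x * s j) * s i = p⁻¹ * x * p := by
    intro x; simp [hp, mul_assoc]
  have hfirst : ∀ x : W, s j * x * s j = s i ↔ x = p * s j := by
    intro x
    constructor
    · rintro h; rw [hp, ← h]; simp [mul_assoc]
    · rintro rfl; simp [hp, mul_assoc]
  have hshift : ∀ (x : W) (r : ℕ), p⁻¹ * x * p = p ^ r * s j ↔ x = p ^ (r + 2) * s j := by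
    intro x r
    have : p * (p ^ r * s j) * p⁻¹ = p ^ (r + 2) * s j := by
      rw [hpinv, pow_succ _ (r + 1), pow_succ', hp]
      simp only [mul_assoc]
    rw [← this]
    exact ⟨fun h => by rw [← h]; group, fun h => by rw [h]; group⟩
  induction k generalizing t ε with
  | zero => simp
  | succ k ih =>
    rw [pow_succ, Equiv.Perm.mul_apply, Equiv.Perm.mul_apply, simpleSignPerm_apply,
      simpleSignPerm_apply, hconj, ih]
    refine Prod.ext (by simp only; group) ?_
    simp only [hshift, hfirst]
    rw [show 2 * (k + 1) = 2 * k + 1 + 1 by ring, Finset.prod_range_succ',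
      Finset.prod_range_succ']
    simp only [pow_zero, one_mul, pow_one, zero_add]
    ac_rfl

lemma isLiftable_simpleSignPerm : M.IsLiftable cs.simpleSignPerm := by
  intro i i'
  ext1 ⟨t, ε⟩
  have hp : (s i' * s i) ^ M i i' = 1 := cs.simple_mul_simple_pow' i i'
  rw [simpleSignPerm_mul_pow_apply, two_mul, Finset.prod_range_add]
  simp only [pow_add, hp, one_mul, Int.units_mul_self, mul_one, inv_one, Equiv.Perm.one_apply]

noncomputable def signRep : W →* Equiv.Perm (W × ℤˣ) :=
  cs.lift ⟨cs.simpleSignPerm, cs.isLiftable_simpleSignPerm⟩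

noncomputable def reflSign (w t : W) : ℤˣ := (cs.signRep w (t, 1)).2

lemma signRep_simple (i : B) : cs.signRep (s i) = cs.simpleSignPerm i :=
  cs.lift_apply_simple cs.isLiftable_simpleSignPerm i

lemma signRep_apply (w t : W) (ε : ℤˣ) :
    cs.signRep w (t, ε) = (w * t * w⁻¹, ε * cs.reflSign w t) := by
  induction w using cs.simple_induction_left generalizing t ε with
  | one => simp [reflSign]
  | mul_simple_left w i ih =>
    have hsign : cs.reflSign (s i * w) t =
        cs.reflSign w t * if w * t * w⁻¹ = s i then -1 else 1 := by
      rw [reflSign, map_mul, Equiv.Perm.mul_apply, ih, signRep_simple, simpleSignPerm_apply,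
        one_mul]
    rw [map_mul, Equiv.Perm.mul_apply, ih, signRep_simple, simpleSignPerm_apply, hsign]
    simp [mul_assoc]

lemma reflSign_one (t : W) : cs.reflSign 1 t = 1 := by
  simp [reflSign]

lemma reflSign_simple (i : B) (t : W) : cs.reflSign (s i) t = if t = s i then -1 else 1 := by
  simp [reflSign, signRep_simple, simpleSignPerm_apply]

lemma reflSign_mul (u v t : W) :
    cs.reflSign (u * v) t = cs.reflSign v t * cs.reflSign u (v * t * v⁻¹) := by
  rw [reflSign, map_mul, Equiv.Perm.mul_apply, signRep_apply, signRep_apply, one_mul]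

lemma reflSign_wordProd_of_not_mem_rightInvSeq {ω : List B} {t : W} (h : t ∉ ris ω) :
    cs.reflSign (π ω) t = 1 := by
  induction ω with
  | nil => exact cs.reflSign_one t
  | cons i ω ih =>
    simp only [rightInvSeq, mem_cons, not_or] at h
    rw [wordProd_cons, reflSign_mul, ih h.2, reflSign_simple, if_neg, one_mul]
    exact fun hconj => h.1 (by rw [← hconj]; group)

lemma reflSign_self {t : W} (ht : cs.IsReflection t) : cs.reflSign t t = -1 := by
  obtain ⟨w, i, rfl⟩ := ht
  have hconj : w⁻¹ * (w * s i * w⁻¹) * w⁻¹⁻¹ = s i := by group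
  have hinv := cs.reflSign_mul w w⁻¹ (w * s i * w⁻¹)
  rw [mul_inv_cancel, reflSign_one, hconj] at hinv
  rw [reflSign_mul, hconj, reflSign_mul, reflSign_simple, if_pos rfl, mul_inv_cancel_right,
    mul_left_comm, ← hinv, mul_one]

lemma reflSign_eq_one_of_length_lt_length_mul {w t : W} (h : ℓ w < ℓ (w * t)) :
    cs.reflSign w t = 1 := by
  obtain ⟨ω, hω, rfl⟩ := cs.exists_isReduced w
  refine cs.reflSign_wordProd_of_not_mem_rightInvSeq fun hmem => ?_
  have := (cs.isRightInversion_of_mem_rightInvSeq hω hmem).2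
  omega

lemma reflSign_eq_neg_one_of_length_mul_lt {w t : W} (ht : cs.IsReflection t)
    (h : ℓ (w * t) < ℓ w) : cs.reflSign w t = -1 := by
  obtain ⟨u, rfl⟩ : ∃ u, w = u * t := ⟨w * t, by rw [mul_assoc, ht.mul_self, mul_one]⟩
  rw [mul_assoc, ht.mul_self, mul_one] at h
  rw [reflSign_mul, reflSign_self cs ht, mul_inv_cancel_right,
    reflSign_eq_one_of_length_lt_length_mul cs h, mul_one]

lemma mem_rightInvSeq_of_length_mul_lt {ω : List B} {t : W} (ht : cs.IsReflection t)
    (h : ℓ (π ω * t) < ℓ (π ω)) : t ∈ ris ω := by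
  by_contra hmem
  have := (cs.reflSign_wordProd_of_not_mem_rightInvSeq hmem).symm.trans
    (cs.reflSign_eq_neg_one_of_length_mul_lt ht h)
  exact absurd this (by decide)

theorem exists_wordProd_eraseIdx_eq_mul {ω : List B} {t : W} (ht : cs.IsReflection t)
    (h : ℓ (π ω * t) < ℓ (π ω)) : ∃ j < ω.length, π (ω.eraseIdx j) = π ω * t := by
  obtain ⟨j, hj, rfl⟩ := List.mem_iff_getElem.mp (cs.mem_rightInvSeq_of_length_mul_lt ht h)
  refine ⟨j, by simpa using hj, ?_⟩
  rw [← getD_eq_getElem _ 1 hj, wordProd_mul_getD_rightInvSeq]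

theorem length_mul_lt_length_mul_simple_mul {x y : W} {i : B} (hx : ℓ x < ℓ (x * s i))
    (hy : ℓ y < ℓ (s i * y)) : ℓ (x * y) < ℓ (x * s i * y) := by
  set t := y⁻¹ * s i * y
  have ht : cs.IsReflection t := ⟨y⁻¹, i, by simp [t]⟩
  have hxyt : x * y * t = x * s i * y := by simp [t, mul_assoc]
  have hsign : cs.reflSign (x * y) t = 1 := by
    have hyt : y * t = s i * y := by simp [t, ← mul_assoc]
    have hconj : y * t * y⁻¹ = s i := by simp [t, ← mul_assoc]
    rw [reflSign_mul, reflSign_eq_one_of_length_lt_length_mul cs (hyt ▸ hy), hconj,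
      reflSign_eq_one_of_length_lt_length_mul cs hx, one_mul]
  rcases (ht.length_mul_left_ne (x * y)).lt_or_gt with hlt | hgt
  · exact absurd (hsign.symm.trans (cs.reflSign_eq_neg_one_of_length_mul_lt ht hlt))
      (by decide)
  · rwa [hxyt] at hgt

end ReflectionCocycle

lemma isReduced_append_singleton_iff {ρ : List B} {i : B} :
    cs.IsReduced (ρ ++ [i]) ↔ cs.IsReduced ρ ∧ ℓ (π ρ) < ℓ (π ρ * s i) := by
  have hle := cs.length_wordProd_le ρ
  have hstep := cs.length_mul_simple (π ρ) i
  simp only [IsReduced, wordProd_append, wordProd_singleton, length_append, length_singleton]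
  omega

lemma isReduced_append_singleton_of_length_mul_simple_lt {ρ : List B} {v : W} {i : B}
    (hρ : cs.IsReduced ρ) (hρv : π ρ = v * s i) (hv : ℓ (v * s i) < ℓ v) :
    cs.IsReduced (ρ ++ [i]) ∧ π (ρ ++ [i]) = v := by
  have hρi : π (ρ ++ [i]) = v := by
    rw [wordProd_append, wordProd_singleton, hρv, simple_mul_simple_cancel_right]
  refine ⟨cs.isReduced_append_singleton_iff.mpr ⟨hρ, ?_⟩, hρi⟩
  rwa [hρv, simple_mul_simple_cancel_right]

theorem exists_sublist_wordProd_eq_mul {ω σ : List B} (hσ : σ <+ ω) {t : W}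
    (ht : cs.IsReflection t) (h : ℓ (π σ * t) < ℓ (π σ)) :
    ∃ σ', σ' <+ ω ∧ π σ' = π σ * t := by
  obtain ⟨j, -, hj⟩ := cs.exists_wordProd_eraseIdx_eq_mul ht h
  exact ⟨σ.eraseIdx j, (eraseIdx_sublist σ j).trans hσ, hj⟩

theorem mul_simple_eq_or_length_add_two_le {w t : W} {i : B} (ht : cs.IsReflection t)
    (hi : ℓ (w * s i) < ℓ w) (hwt : ℓ (w * t) < ℓ w) :
    w * t * s i = w ∨ ℓ (w * t * s i) + 2 ≤ ℓ w := by
  obtain ⟨ρ, hρ, hρw⟩ := cs.exists_isReduced (w * s i)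
  obtain ⟨hρi, hw⟩ :=
    cs.isReduced_append_singleton_of_length_mul_simple_lt hρ hρw.symm hi
  rw [← hw] at hwt
  obtain ⟨j, hj, hjw⟩ := cs.exists_wordProd_eraseIdx_eq_mul ht hwt
  rw [hw] at hjw
  rcases (Nat.lt_succ_iff.mp (by simpa using hj)).lt_or_eq with hj | rfl
  · right
    rw [eraseIdx_append_of_lt_length hj, wordProd_append, wordProd_singleton] at hjw
    rw [← hjw, simple_mul_simple_cancel_right, ← hw, hρi, length_append, length_singleton]
    have := cs.length_wordProd_le (ρ.eraseIdx j)
    have := length_eraseIdx_add_one hj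
    omega
  · left
    simp only [eraseIdx_append_of_length_le le_rfl, Nat.sub_self, eraseIdx_cons_zero,
      append_nil] at hjw
    rw [← hjw, ← hρw, simple_mul_simple_cancel_right]

section BruhatChain

/-- The Bruhat order in its reflection form is the reflexive-transitive closure of this
relation; `BruhatLE` is its subword form. -/
def IsBruhatStep (u w : W) : Prop := ℓ u < ℓ w ∧ cs.IsReflection (u⁻¹ * w)

lemma isBruhatStep_mul_simple {w : W} {i : B} (hw : ℓ w < ℓ (w * s i)) :
    cs.IsBruhatStep w (w * s i) :=
  ⟨hw, by simpa using cs.isReflection_simple i⟩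

theorem reflTransGen_isBruhatStep_mul_simple {u w : W} {i : B}
    (huw : Relation.ReflTransGen cs.IsBruhatStep u w) (hw : ℓ w < ℓ (w * s i)) :
    Relation.ReflTransGen cs.IsBruhatStep (u * s i) (w * s i) := by
  have hw_step := cs.isBruhatStep_mul_simple hw
  induction huw using Relation.ReflTransGen.head_induction_on with
  | refl => rfl
  | @head u u' huu' hu'w ih =>
    obtain ⟨hlen, ht⟩ := huu'
    have hconj : cs.IsReflection ((u * s i)⁻¹ * (u' * s i)) := by
      simpa [mul_assoc] using ht.conj (s i)
    rcases cs.length_mul_simple u i with hu | hu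
    · rcases cs.length_mul_simple u' i with hu' | hu'
      · exact .head (show cs.IsBruhatStep _ _ from ⟨by omega, hconj⟩) ih
      · have hu't : u' * (u'⁻¹ * u) = u := mul_inv_cancel_left u' u
        rcases cs.mul_simple_eq_or_length_add_two_le (w := u') (t := u'⁻¹ * u) (i := i)
          (by simpa using ht.isReflection_inv)
          (by omega) (by rw [hu't]; omega) with heq | hle
        · rw [hu't] at heq
          rw [heq]
          exact hu'w.tail hw_step
        · rw [hu't] at hle
          exact .head (show cs.IsBruhatStep _ _ from ⟨by omega, hconj⟩) ih
    · have hdown : cs.IsBruhatStep (u * s i) u :=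
        ⟨by omega, by simpa [mul_assoc] using cs.isReflection_simple i⟩
      exact .head hdown ((Relation.ReflTransGen.head ⟨hlen, ht⟩ hu'w).tail hw_step)

theorem reflTransGen_isBruhatStep_of_sublist {ω σ : List B} (hω : cs.IsReduced ω)
    (hσ : σ <+ ω) : Relation.ReflTransGen cs.IsBruhatStep (π σ) (π ω) := by
  induction ω using List.reverseRecOn generalizing σ with
  | nil => rw [sublist_nil.mp hσ]
  | append_singleton ρ i ih =>
    obtain ⟨hρ, hρi⟩ := cs.isReduced_append_singleton_iff.mp hω
    rw [wordProd_append, wordProd_singleton]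
    obtain ⟨σ₁, τ, rfl, hσ₁, hτ⟩ := sublist_append_iff.mp hσ
    rcases sublist_singleton.mp hτ with rfl | rfl
    · rw [append_nil]
      exact (ih hρ hσ₁).tail (cs.isBruhatStep_mul_simple hρi)
    · rw [wordProd_append, wordProd_singleton]
      exact cs.reflTransGen_isBruhatStep_mul_simple (ih hρ hσ₁) hρi

theorem exists_sublist_of_reflTransGen_isBruhatStep {u : W} {ω : List B}
    (h : Relation.ReflTransGen cs.IsBruhatStep u (π ω)) : ∃ σ, σ <+ ω ∧ π σ = u := by
  induction h using Relation.ReflTransGen.head_induction_on with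
  | refl => exact ⟨ω, Sublist.refl ω, rfl⟩
  | @head u _ hstep _ ih =>
    obtain ⟨σ, hσ, rfl⟩ := ih
    obtain ⟨hlen, ht⟩ := hstep
    obtain ⟨σ', hσ', hσ'u⟩ :=
      cs.exists_sublist_wordProd_eq_mul hσ (by simpa using ht.isReflection_inv) (by simpa)
    exact ⟨σ', hσ', by simpa using hσ'u⟩

end BruhatChain

section BruhatLE

variable {cs}

theorem _root_.BruhatLE.exists_sublist {u w : W} (h : BruhatLE cs u w) {ω : List B}
    (hω : π ω = w) : ∃ σ, σ <+ ω ∧ π σ = u := by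
  obtain ⟨ω₀, hω₀, rfl, σ₀, hσ₀, rfl⟩ := h
  exact cs.exists_sublist_of_reflTransGen_isBruhatStep
    (hω ▸ cs.reflTransGen_isBruhatStep_of_sublist hω₀ hσ₀)

lemma _root_.BruhatLE.eq_one {u : W} (h : BruhatLE cs u 1) : u = 1 := by
  obtain ⟨σ, hσ, rfl⟩ := h.exists_sublist (ω := []) rfl
  rw [sublist_nil.mp hσ, wordProd_nil]

lemma bruhatLE_refl (w : W) : BruhatLE cs w w := by
  obtain ⟨ω, hω, rfl⟩ := cs.exists_isReduced w
  exact ⟨ω, hω, rfl, ω, Sublist.refl ω, rfl⟩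

lemma _root_.BruhatLE.mul_of_length_mul_lt {u w t : W} (h : BruhatLE cs u w)
    (ht : cs.IsReflection t) (hut : ℓ (u * t) < ℓ u) : BruhatLE cs (u * t) w := by
  obtain ⟨ω, hω, hωw, σ, hσ, rfl⟩ := h
  obtain ⟨σ', hσ', hσ't⟩ := cs.exists_sublist_wordProd_eq_mul hσ ht hut
  exact ⟨ω, hω, hωw, σ', hσ', hσ't⟩

theorem bruhatLE_iff_of_length_mul_simple_lt {u v : W} {i : B} (hv : ℓ (v * s i) < ℓ v) :
    BruhatLE cs u v ↔ BruhatLE cs u (v * s i) ∨ BruhatLE cs (u * s i) (v * s i) := by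
  constructor
  · intro h
    obtain ⟨ρ, hρ, hρv⟩ := cs.exists_isReduced (v * s i)
    obtain ⟨-, hρi⟩ := cs.isReduced_append_singleton_of_length_mul_simple_lt hρ hρv.symm hv
    obtain ⟨σ, hσ, rfl⟩ := h.exists_sublist hρi
    obtain ⟨σ₁, τ, rfl, hσ₁, hτ⟩ := sublist_append_iff.mp hσ
    rcases sublist_singleton.mp hτ with rfl | rfl
    · exact .inl ⟨ρ, hρ, hρv.symm, σ₁, hσ₁, by rw [append_nil]⟩
    · refine .inr ⟨ρ, hρ, hρv.symm, σ₁, hσ₁, ?_⟩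
      rw [wordProd_append, wordProd_singleton, simple_mul_simple_cancel_right]
  · rintro (⟨ρ, hρ, hρv, σ, hσ, rfl⟩ | ⟨ρ, hρ, hρv, σ, hσ, hσu⟩)
    · obtain ⟨hρi, hρiv⟩ := cs.isReduced_append_singleton_of_length_mul_simple_lt hρ hρv hv
      exact ⟨ρ ++ [i], hρi, hρiv, σ, hσ.trans (sublist_append_left ρ [i]), rfl⟩
    · obtain ⟨hρi, hρiv⟩ := cs.isReduced_append_singleton_of_length_mul_simple_lt hρ hρv hv
      refine ⟨ρ ++ [i], hρi, hρiv, σ ++ [i], hσ.append (Sublist.refl [i]), ?_⟩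
      rw [wordProd_append, wordProd_singleton, hσu, simple_mul_simple_cancel_right]

lemma _root_.BruhatLE.mul_simple {u v : W} {i : B} (h : BruhatLE cs u v)
    (hv : ℓ (v * s i) < ℓ v) : BruhatLE cs (u * s i) v := by
  rw [bruhatLE_iff_of_length_mul_simple_lt hv] at h ⊢
  rw [simple_mul_simple_cancel_right]
  exact h.symm

end BruhatLE

def IsLengthMinimizer (x v w : W) : Prop :=
  BruhatLE cs w v ∧ ℓ (x * w⁻¹) + ℓ w = ℓ x ∧
    ∀ v', BruhatLE cs v' v → v' ≠ w → ℓ (x * w⁻¹) < ℓ (x * v'⁻¹)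

lemma isLengthMinimizer_one (x : W) : cs.IsLengthMinimizer x 1 1 :=
  ⟨cs.bruhatLE_refl 1, by simp, fun _ h hne => absurd h.eq_one hne⟩

namespace IsLengthMinimizer

variable {cs} {x v w : W} {i : B}

lemma length_le (h : cs.IsLengthMinimizer x v w) {v' : W} (hv' : BruhatLE cs v' v) :
    ℓ (x * w⁻¹) ≤ ℓ (x * v'⁻¹) := by
  rcases eq_or_ne v' w with rfl | hne
  · rfl
  · exact (h.2.2 v' hv' hne).le

lemma mul_simple (h : cs.IsLengthMinimizer (x * s i) v w) (hv : ℓ (v * s i) < ℓ v)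
    (hx : ℓ (x * s i) < ℓ x) : cs.IsLengthMinimizer x v (w * s i) := by
  obtain ⟨hwv, hlen, hmin⟩ := h
  have hxw : x * (w * s i)⁻¹ = x * s i * w⁻¹ := by simp [mul_assoc]
  refine ⟨hwv.mul_simple hv, ?_, fun v' hv' hne => ?_⟩
  · have hsub := cs.length_mul_le (x * (w * s i)⁻¹) (w * s i)
    rw [inv_mul_cancel_right] at hsub
    rw [hxw] at hsub ⊢
    have := cs.length_mul_simple x i
    have := cs.length_mul_simple w i
    omega
  · have hne' : v' * s i ≠ w := fun h => hne (by rw [← h, simple_mul_simple_cancel_right])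
    simpa [hxw, mul_assoc] using hmin (v' * s i) (hv'.mul_simple hv) hne'

lemma of_mul_simple (h : cs.IsLengthMinimizer x (v * s i) w) (hv : ℓ (v * s i) < ℓ v)
    (hx : ℓ x < ℓ (x * s i)) : cs.IsLengthMinimizer x v w := by
  refine ⟨(bruhatLE_iff_of_length_mul_simple_lt hv).2 (.inl h.1), h.2.1, fun v' hv' hne => ?_⟩
  rcases (bruhatLE_iff_of_length_mul_simple_lt hv).1 hv' with hv' | hv's
  · exact h.2.2 v' hv' hne
  rcases cs.length_mul_simple v' i with hup | hdown
  · have := hv's.mul_of_length_mul_lt (cs.isReflection_simple i)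
      (by rw [simple_mul_simple_cancel_right]; omega)
    rw [simple_mul_simple_cancel_right] at this
    exact h.2.2 v' this hne
  · have hy : ℓ ((v' * s i)⁻¹) < ℓ (s i * (v' * s i)⁻¹) := by
      rw [length_inv, mul_inv_rev, inv_simple, simple_mul_simple_cancel_left, length_inv]
      omega
    calc ℓ (x * w⁻¹) ≤ ℓ (x * (v' * s i)⁻¹) := h.length_le hv's
      _ < ℓ (x * s i * (v' * s i)⁻¹) := cs.length_mul_lt_length_mul_simple_mul hx hy
      _ = ℓ (x * v'⁻¹) := by simp [mul_assoc]

end IsLengthMinimizer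

theorem exists_isLengthMinimizer (x v : W) : ∃ w, cs.IsLengthMinimizer x v w := by
  induction hn : ℓ x + ℓ v using Nat.strong_induction_on generalizing x v with
  | _ n ih =>
  rcases eq_or_ne v 1 with rfl | hv1
  · exact ⟨1, cs.isLengthMinimizer_one x⟩
  obtain ⟨i, hi⟩ := cs.exists_rightDescent_of_ne_one hv1
  have hv : ℓ (v * s i) < ℓ v := hi
  rcases cs.length_mul_simple x i with hx | hx
  · obtain ⟨w, hw⟩ := ih _ (by omega) x (v * s i) rfl
    exact ⟨w, hw.of_mul_simple hv (by omega)⟩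
  · obtain ⟨w, hw⟩ := ih _ (by omega) (x * s i) v rfl
    exact ⟨w * s i, hw.mul_simple hv (by omega)⟩

end CoxeterSystem

theorem stmt7_general {B W : Type*} [Group W] {M : CoxeterMatrix B} (cs : CoxeterSystem M W)
    (x v₁ : W) :
    ∃ v₃ : W, BruhatLE cs v₃ v₁ ∧
      cs.length (x * v₃⁻¹) + cs.length v₃ = cs.length x ∧
      (∀ v' : W, BruhatLE cs v' v₁ → cs.length (x * v₃⁻¹) ≤ cs.length (x * v'⁻¹)) ∧
      (∀ v' : W, BruhatLE cs v' v₁ →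
        cs.length (x * v'⁻¹) = cs.length (x * v₃⁻¹) → x * v'⁻¹ = x * v₃⁻¹) := by
  obtain ⟨v₃, h⟩ := cs.exists_isLengthMinimizer x v₁
  refine ⟨v₃, h.1, h.2.1, fun v' hv' => h.length_le hv', fun v' hv' hlen => ?_⟩
  rcases eq_or_ne v' v₃ with rfl | hne
  · rfl
  · exact absurd hlen (h.2.2 v' hv' hne).ne'

/-- in a Coxeter group, let `x ∈ W` and let `v₁` belong to the standard
parabolic subgroup generated by the simple reflections indexed by `J`. Then there is
`v₃ ≤ v₁` such that `x v₃⁻¹` is the unique element of minimal length in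
`{x v'⁻¹ : v' ≤ v₁}`, and moreover `ℓ(x v₃⁻¹) = ℓ(x) - ℓ(v₃)`. -/
theorem stmt7 {B W : Type*} [Group W] {M : CoxeterMatrix B} (cs : CoxeterSystem M W)
    (J : Set B) (x v₁ : W) (hv₁ : v₁ ∈ Subgroup.closure (cs.simple '' J)) :
    ∃ v₃ : W, BruhatLE cs v₃ v₁ ∧
      cs.length (x * v₃⁻¹) + cs.length v₃ = cs.length x ∧
      (∀ v' : W, BruhatLE cs v' v₁ → cs.length (x * v₃⁻¹) ≤ cs.length (x * v'⁻¹)) ∧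
      (∀ v' : W, BruhatLE cs v' v₁ →
        cs.length (x * v'⁻¹) = cs.length (x * v₃⁻¹) → x * v'⁻¹ = x * v₃⁻¹) :=
  stmt7_general cs x v₁
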